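/- arXiv:1705.07837 — 2 statements merged into one kernel-verified Lean document; each statement's English description precedes it below -/
import Mathlib

section
/- For every optimal solution (I₁,…,I_K) of the cardinality-constrained K-means clustering problem and every pair of distinct clusters I_k, I_ℓ with centroids ζ_k, ζ_ℓ, the hyperplane with normal vector h = ζ_k − ζ_ℓ separates the two clusters: for all i_k ∈ I_k and i_ℓ ∈ I_ℓ, hᵀ(ξ_{i_k} − ξ_{i_ℓ}) ≥ 0. -/
/-!
Exchanging a point `ξ_a` of cluster `k` with a point `ξ_b` of cluster `ℓ` keeps all
cardinalities, so by optimality the new partition costs no less. Its cost is at most the cost of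
its points measured against the *old* centroids (a centroid minimises the sum of squared
distances to its cluster), and against the old centroids the exchange changes the cost by exactly
`‖ξ_b - ζ_k‖² - ‖ξ_a - ζ_k‖² + ‖ξ_a - ζ_ℓ‖² - ‖ξ_b - ζ_ℓ‖² = 2 ⟪ζ_k - ζ_ℓ, ξ_a - ξ_b⟫`.
-/

/-- The cardinality-constrained K-means objective of a partition `I` of the
datapoints `ξ`, where cluster `k` has prescribed cardinality `nk k`. -/
noncomputable def kmeansObj {N d K : ℕ} (ξ : Fin N → EuclideanSpace ℝ (Fin d))
    (nk : Fin K → ℕ) (I : Fin K → Finset (Fin N)) : ℝ :=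
  ∑ k, ∑ i ∈ I k, ‖ξ i - (nk k : ℝ)⁻¹ • ∑ j ∈ I k, ξ j‖ ^ 2

/-- A feasible partition of `{1,…,N}` into clusters of cardinalities `nk`. -/
def FeasiblePartition {N K : ℕ} (nk : Fin K → ℕ) (I : Fin K → Finset (Fin N)) : Prop :=
  (∀ k, (I k).card = nk k) ∧ (∀ k ℓ, k ≠ ℓ → Disjoint (I k) (I ℓ)) ∧
    (∀ i : Fin N, ∃ k, i ∈ I k)

open Finset Function RealInnerProductSpace

section

variable {ι E : Type*} [NormedAddCommGroup E] [InnerProductSpace ℝ E]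

theorem Finset.sum_norm_sub_centroid_sq_le (s : Finset ι) (x : ι → E) (c : E) :
    ∑ i ∈ s, ‖x i - (#s : ℝ)⁻¹ • ∑ j ∈ s, x j‖ ^ 2 ≤ ∑ i ∈ s, ‖x i - c‖ ^ 2 := by
  set μ := (#s : ℝ)⁻¹ • ∑ j ∈ s, x j
  have hdev : ∑ i ∈ s, (x i - μ) = 0 := by
    rcases s.eq_empty_or_nonempty with rfl | hs
    · exact sum_empty
    rw [sum_sub_distrib, sum_const, ← Nat.cast_smul_eq_nsmul ℝ, smul_smul,
      mul_inv_cancel₀ (by exact_mod_cast hs.card_ne_zero), one_smul, sub_self]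
  -- Pythagoras: the deviations from `μ` sum to zero, so the cross terms vanish.
  have hsplit : ∑ i ∈ s, ‖x i - c‖ ^ 2 = ∑ i ∈ s, ‖x i - μ‖ ^ 2 + #s * ‖μ - c‖ ^ 2 := by
    have hterm (i : ι) : ‖x i - c‖ ^ 2 = ‖x i - μ‖ ^ 2 + 2 * ⟪x i - μ, μ - c⟫ + ‖μ - c‖ ^ 2 := by
      rw [← norm_add_sq_real, sub_add_sub_cancel]
    simp only [hterm, sum_add_distrib, ← mul_sum, ← sum_inner, hdev, inner_zero_left, mul_zero,
      add_zero, sum_const, nsmul_eq_mul]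
  rw [hsplit]
  exact le_add_of_nonneg_right (by positivity)

theorem norm_sub_sq_exchange (x y c c' : E) :
    ‖y - c‖ ^ 2 - ‖x - c‖ ^ 2 + (‖x - c'‖ ^ 2 - ‖y - c'‖ ^ 2) = 2 * ⟪c - c', x - y⟫ := by
  simp only [norm_sub_sq_real, inner_sub_left, inner_sub_right, real_inner_comm c,
    real_inner_comm c']
  ring

end

theorem Finset.sum_comp_swap_of_mem_of_notMem {ι M : Type*} [DecidableEq ι] [AddCommGroup M]
    {s : Finset ι} {a b : ι} (ha : a ∈ s) (hb : b ∉ s) (g : ι → M) :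
    ∑ i ∈ s, g (Equiv.swap a b i) = ∑ i ∈ s, g i - g a + g b := by
  have hfix : ∀ i ∈ s.erase a, g (Equiv.swap a b i) = g i := fun i hi =>
    congrArg g <| Equiv.swap_apply_of_ne_of_ne (ne_of_mem_erase hi)
      (ne_of_mem_of_not_mem (mem_of_mem_erase hi) hb)
  rw [← add_sum_erase s _ ha, ← add_sum_erase s _ ha, sum_congr rfl hfix, Equiv.swap_apply_left]
  abel

noncomputable def clusterCost {ι κ E : Type*} [Fintype κ] [NormedAddCommGroup E] (x : ι → E)
    (I : κ → Finset ι) (c : κ → E) : ℝ :=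
  ∑ m, ∑ i ∈ I m, ‖x i - c m‖ ^ 2

section clusterCost

variable {ι κ E : Type*} [Fintype κ] [NormedAddCommGroup E]

theorem clusterCost_map_perm (x : ι → E) (I : κ → Finset ι) (c : κ → E) (σ : Equiv.Perm ι) :
    clusterCost x (fun m => (I m).map σ.toEmbedding) c = clusterCost (x ∘ σ) I c := by
  simp [clusterCost, sum_map]

theorem clusterCost_comp_swap [DecidableEq ι] {I : κ → Finset ι} (hI : Pairwise (Disjoint on I))
    (x : ι → E) (c : κ → E) {k ℓ : κ} (hkl : k ≠ ℓ) {a b : ι} (ha : a ∈ I k) (hb : b ∈ I ℓ) :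
    clusterCost (x ∘ Equiv.swap a b) I c = clusterCost x I c
      + (‖x b - c k‖ ^ 2 - ‖x a - c k‖ ^ 2) + (‖x a - c ℓ‖ ^ 2 - ‖x b - c ℓ‖ ^ 2) := by
  have hbk : b ∉ I k := disjoint_right.1 (hI hkl) hb
  have haℓ : a ∉ I ℓ := disjoint_left.1 (hI hkl) ha
  have hfix : ∀ m, m ≠ k ∧ m ≠ ℓ →
      ∑ i ∈ I m, ‖x (Equiv.swap a b i) - c m‖ ^ 2 - ∑ i ∈ I m, ‖x i - c m‖ ^ 2 = 0 := by
    rintro m ⟨hmk, hmℓ⟩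
    refine sub_eq_zero.2 (sum_congr rfl fun i hi => ?_)
    rw [Equiv.swap_apply_of_ne_of_ne (ne_of_mem_of_not_mem hi (disjoint_right.1 (hI hmk) ha))
      (ne_of_mem_of_not_mem hi (disjoint_right.1 (hI hmℓ) hb))]
  have hdiff := Fintype.sum_eq_add k ℓ hkl hfix
  have hk := sum_comp_swap_of_mem_of_notMem ha hbk fun i => ‖x i - c k‖ ^ 2
  have hℓ := sum_comp_swap_of_mem_of_notMem hb haℓ fun i => ‖x i - c ℓ‖ ^ 2
  rw [Equiv.swap_comm] at hℓ
  rw [sum_sub_distrib] at hdiff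
  simp only [clusterCost, comp_apply] at hk hℓ ⊢
  linarith

end clusterCost

theorem FeasiblePartition.map_perm {N K : ℕ} {nk : Fin K → ℕ} {I : Fin K → Finset (Fin N)}
    (h : FeasiblePartition nk I) (σ : Equiv.Perm (Fin N)) :
    FeasiblePartition nk (fun m => (I m).map σ.toEmbedding) := by
  obtain ⟨hcard, hdisj, hcover⟩ := h
  refine ⟨fun m => by simp [hcard m], fun m m' hmm' => by simpa using hdisj m m' hmm', fun i => ?_⟩
  obtain ⟨m, hm⟩ := hcover (σ.symm i)
  exact ⟨m, mem_map.2 ⟨σ.symm i, hm, by simp⟩⟩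

theorem kmeansObj_le_clusterCost {N d K : ℕ} (ξ : Fin N → EuclideanSpace ℝ (Fin d))
    {nk : Fin K → ℕ} {J : Fin K → Finset (Fin N)} (hcard : ∀ m, #(J m) = nk m)
    (c : Fin K → EuclideanSpace ℝ (Fin d)) :
    kmeansObj ξ nk J ≤ clusterCost ξ J c :=
  sum_le_sum fun m _ => hcard m ▸ sum_norm_sub_centroid_sq_le (J m) ξ (c m)

theorem optimal_clusters_hyperplane_separated_general (N d K : ℕ)
    (ξ : Fin N → EuclideanSpace ℝ (Fin d)) (nk : Fin K → ℕ)
    (I : Fin K → Finset (Fin N)) (hfeas : FeasiblePartition nk I)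
    (hopt : ∀ J : Fin K → Finset (Fin N), FeasiblePartition nk J →
      kmeansObj ξ nk I ≤ kmeansObj ξ nk J)
    (k ℓ : Fin K) (hkl : k ≠ ℓ)
    (ik : Fin N) (hik : ik ∈ I k) (il : Fin N) (hil : il ∈ I ℓ) :
    0 ≤ inner (𝕜 := ℝ)
        (((nk k : ℝ)⁻¹ • ∑ j ∈ I k, ξ j) - ((nk ℓ : ℝ)⁻¹ • ∑ j ∈ I ℓ, ξ j))
        (ξ ik - ξ il) := by
  set ζ : Fin K → EuclideanSpace ℝ (Fin d) := fun m => (nk m : ℝ)⁻¹ • ∑ j ∈ I m, ξ j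
  set σ := Equiv.swap ik il
  have hexchange : kmeansObj ξ nk I ≤ clusterCost (ξ ∘ σ) I ζ :=
    calc kmeansObj ξ nk I
        ≤ kmeansObj ξ nk (fun m => (I m).map σ.toEmbedding) := hopt _ (hfeas.map_perm σ)
      _ ≤ clusterCost ξ (fun m => (I m).map σ.toEmbedding) ζ :=
          kmeansObj_le_clusterCost ξ (hfeas.map_perm σ).1 ζ
      _ = clusterCost (ξ ∘ σ) I ζ := clusterCost_map_perm ξ I ζ σ
  have hdisj : Pairwise (Disjoint on I) := fun m m' => hfeas.2.1 m m'
  rw [clusterCost_comp_swap hdisj ξ ζ hkl hik hil] at hexchange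
  have hobj : kmeansObj ξ nk I = clusterCost ξ I ζ := rfl
  have := norm_sub_sq_exchange (ξ ik) (ξ il) (ζ k) (ζ ℓ)
  linarith

theorem optimal_clusters_hyperplane_separated (N d K : ℕ)
    (ξ : Fin N → EuclideanSpace ℝ (Fin d)) (nk : Fin K → ℕ)
    (hnk : ∀ k, nk k ≠ 0)
    (I : Fin K → Finset (Fin N)) (hfeas : FeasiblePartition nk I)
    (hopt : ∀ J : Fin K → Finset (Fin N), FeasiblePartition nk J →
      kmeansObj ξ nk I ≤ kmeansObj ξ nk J)
    (k ℓ : Fin K) (hkl : k ≠ ℓ)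
    (ik : Fin N) (hik : ik ∈ I k) (il : Fin N) (hil : il ∈ I ℓ) :
    0 ≤ inner (𝕜 := ℝ)
        (((nk k : ℝ)⁻¹ • ∑ j ∈ I k, ξ j) - ((nk ℓ : ℝ)⁻¹ • ∑ j ∈ I ℓ, ξ j))
        (ξ ik - ξ il) :=
  optimal_clusters_hyperplane_separated_general N d K ξ nk I hfeas hopt k ℓ hkl ik hik il hil
end

section
/- Suppose a partition (J₁,…,J_K) of {1,…,N} into equal clusters of size n = N/K satisfies the perfect separation condition: the maximum squared distance between two points in the same cluster is strictly smaller than the minimum squared distance between points of distinct clusters. Then (J₁,…,J_K) is the unique optimal solution of the balanced cardinality-constrained K-means problem, and its objective value equals (1/(2n))∑ₖ∑_{i,j∈J_k} d_{ij}, which is (1/(2n)) times the sum of the Kn(n−1) smallest off-diagonal entries of the squared-distance matrix D. -/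
/-- The balanced K-means objective of a partition into clusters of size `n`. -/
noncomputable def balancedKmeansObj {N d K : ℕ} (n : ℕ)
    (ξ : Fin N → EuclideanSpace ℝ (Fin d)) (I : Fin K → Finset (Fin N)) : ℝ :=
  ∑ k, ∑ i ∈ I k, ‖ξ i - (n : ℝ)⁻¹ • ∑ j ∈ I k, ξ j‖ ^ 2

/-- A balanced partition of `{1,…,N}` into `K` clusters of size `n`. -/
def BalancedPartition {N K : ℕ} (n : ℕ) (I : Fin K → Finset (Fin N)) : Prop :=
  (∀ k, (I k).card = n) ∧ (∀ k ℓ, k ≠ ℓ → Disjoint (I k) (I ℓ)) ∧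
    (∀ i : Fin N, ∃ k, i ∈ I k)


/-!
Splitting the squared distances to a cluster mean into pairwise squared distances turns the
balanced K-means objective into `1/(2n)` times the total squared distance over the ordered
within-cluster pairs of distinct points. Every balanced partition has exactly `K n (n - 1)` such
pairs, and under perfect separation the pairs of `J` are the cheapest set of that size: exchanging
a pair of `J` missing from a competitor for one of the competitor's pairs missing from `J` always
swaps a within-cluster pair of `J` for a between-cluster one. The exchange is strict, so any other
optimal partition has the same within-cluster pairs as `J`, hence the same clusters.
-/

open Finset Function

section SumExchange

variable {α M : Type*} [AddCommMonoid M] [PartialOrder M] [IsOrderedCancelAddMonoid M]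

theorem Finset.sum_lt_sum_of_card_eq_of_forall_lt {A B : Finset α} {f : α → M}
    (hcard : #A = #B) (hA : A.Nonempty) (hlt : ∀ a ∈ A, ∀ b ∈ B, f a < f b) :
    ∑ a ∈ A, f a < ∑ b ∈ B, f b := by
  let e : A ≃ B := equivOfCardEq hcard
  have : Nonempty A := hA.to_subtype
  calc ∑ a ∈ A, f a = ∑ a : A, f a := (sum_coe_sort A f).symm
    _ < ∑ a : A, f (e a) :=
      sum_lt_sum_of_nonempty univ_nonempty fun a _ => hlt a a.2 (e a) (e a).2
    _ = ∑ b ∈ B, f b := by rw [Equiv.sum_comp e (fun b : B => f b), sum_coe_sort]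

theorem Finset.sum_lt_sum_of_forall_sdiff_lt [DecidableEq α] {P T : Finset α} {f : α → M}
    (hcard : #P = #T) (hne : P ≠ T) (hlt : ∀ a ∈ P \ T, ∀ b ∈ T \ P, f a < f b) :
    ∑ a ∈ P, f a < ∑ b ∈ T, f b := by
  have hPT : (P \ T).Nonempty :=
    sdiff_nonempty.2 fun h => hne (eq_of_subset_of_card_le h hcard.ge)
  rw [← sum_inter_add_sum_sdiff P T, ← sum_inter_add_sum_sdiff T P, inter_comm]
  exact (add_lt_add_iff_left _).2
    (sum_lt_sum_of_card_eq_of_forall_lt (card_sdiff_comm hcard) hPT hlt)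

theorem Finset.sum_le_sum_of_forall_sdiff_lt [DecidableEq α] {P T : Finset α} {f : α → M}
    (hcard : #P = #T) (hlt : ∀ a ∈ P \ T, ∀ b ∈ T \ P, f a < f b) :
    ∑ a ∈ P, f a ≤ ∑ b ∈ T, f b := by
  rcases eq_or_ne P T with rfl | hne
  · rfl
  · exact (sum_lt_sum_of_forall_sdiff_lt hcard hne hlt).le

end SumExchange

theorem Finset.sum_norm_sub_mean_sq {ι E : Type*} [NormedAddCommGroup E]
    [InnerProductSpace ℝ E] (S : Finset ι) (x : ι → E) :
    ∑ i ∈ S, ‖x i - (#S : ℝ)⁻¹ • ∑ j ∈ S, x j‖ ^ 2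
      = 1 / (2 * #S) * ∑ i ∈ S, ∑ j ∈ S, ‖x i - x j‖ ^ 2 := by
  rcases S.eq_empty_or_nonempty with rfl | hS
  · simp
  have hn : (#S : ℝ) ≠ 0 := by exact_mod_cast hS.card_pos.ne'
  set s := ∑ j ∈ S, x j
  have hinner : ∑ i ∈ S, inner ℝ (x i) s = ‖s‖ ^ 2 := by
    rw [← sum_inner, real_inner_self_eq_norm_sq]
  have hlhs : ∑ i ∈ S, ‖x i - (#S : ℝ)⁻¹ • s‖ ^ 2
      = ∑ i ∈ S, ‖x i‖ ^ 2 - 2 * (#S : ℝ)⁻¹ * ‖s‖ ^ 2 + #S * ((#S : ℝ)⁻¹ ^ 2 * ‖s‖ ^ 2) := by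
    simp only [norm_sub_sq_real, real_inner_smul_right, norm_smul, mul_pow, Real.norm_eq_abs,
      sq_abs, sum_add_distrib, sum_sub_distrib, ← mul_sum, hinner, sum_const, nsmul_eq_mul]
    ring
  have hinner₂ : ∑ i ∈ S, ∑ j ∈ S, inner ℝ (x i) (x j) = ‖s‖ ^ 2 := by
    simp_rw [← inner_sum]
    exact hinner
  have hrhs : ∑ i ∈ S, ∑ j ∈ S, ‖x i - x j‖ ^ 2 = 2 * #S * ∑ i ∈ S, ‖x i‖ ^ 2 - 2 * ‖s‖ ^ 2 := by
    simp only [norm_sub_sq_real, sum_add_distrib, sum_sub_distrib, ← mul_sum, hinner₂,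
      sum_const, nsmul_eq_mul]
    ring
  rw [hlhs, hrhs]
  field_simp
  ring

section Partition

variable {N K n : ℕ}

def withinClusterPairs (I : Fin K → Finset (Fin N)) : Finset (Fin N × Fin N) :=
  univ.offDiag.filter fun p => ∃ k, p.1 ∈ I k ∧ p.2 ∈ I k

theorem mem_withinClusterPairs {I : Fin K → Finset (Fin N)} {p : Fin N × Fin N} :
    p ∈ withinClusterPairs I ↔ p.1 ≠ p.2 ∧ ∃ k, p.1 ∈ I k ∧ p.2 ∈ I k := by
  simp [withinClusterPairs]

theorem withinClusterPairs_eq_biUnion (I : Fin K → Finset (Fin N)) :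
    withinClusterPairs I = univ.biUnion fun k => (I k).offDiag := by
  ext p
  simp only [mem_withinClusterPairs, mem_biUnion, mem_univ, true_and, mem_offDiag]
  tauto

theorem pairwise_disjoint_offDiag {ι α : Type*} {I : ι → Finset α}
    (hI : Pairwise (Disjoint on I)) :
    Pairwise (Disjoint on fun k => (I k).offDiag) := by
  intro k ℓ hkℓ
  simp only [onFun, disjoint_left, mem_offDiag]
  exact fun _ hk hℓ => disjoint_left.1 (hI hkℓ) hk.1 hℓ.1

theorem card_withinClusterPairs {I : Fin K → Finset (Fin N)} (hI : BalancedPartition n I) :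
    #(withinClusterPairs I) = K * n * (n - 1) := by
  rw [withinClusterPairs_eq_biUnion,
    card_biUnion ((pairwise_disjoint_offDiag hI.2.1).set_pairwise _)]
  simp [offDiag_card, hI.1, Nat.mul_sub_one, mul_assoc]

theorem sum_withinClusterPairs {I : Fin K → Finset (Fin N)} (hI : Pairwise (Disjoint on I))
    (g : Fin N → Fin N → ℝ) (hg : ∀ i, g i i = 0) :
    ∑ p ∈ withinClusterPairs I, g p.1 p.2 = ∑ k, ∑ i ∈ I k, ∑ j ∈ I k, g i j := by
  rw [withinClusterPairs_eq_biUnion, sum_biUnion ((pairwise_disjoint_offDiag hI).set_pairwise _)]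
  refine sum_congr rfl fun k _ => ?_
  rw [← sum_product', ← diag_union_offDiag, sum_union (disjoint_diag_offDiag _), sum_diag]
  simp [hg]

namespace BalancedPartition

theorem eq_of_mem {I : Fin K → Finset (Fin N)} (hI : BalancedPartition n I) {k ℓ : Fin K}
    {i : Fin N} (hk : i ∈ I k) (hℓ : i ∈ I ℓ) : k = ℓ := by
  by_contra h
  exact disjoint_left.1 (hI.2.1 k ℓ h) hk hℓ

theorem nonempty {I : Fin K → Finset (Fin N)} (hI : BalancedPartition n I) (hn : 0 < n)
    (k : Fin K) : (I k).Nonempty :=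
  card_pos.1 (hI.1 k ▸ hn)

variable {I J : Fin K → Finset (Fin N)}

theorem eq_of_withinClusterPairs_eq (hI : BalancedPartition n I) (hJ : BalancedPartition n J)
    (h : withinClusterPairs I = withinClusterPairs J) {k ℓ : Fin K} {i : Fin N}
    (hik : i ∈ I k) (hiℓ : i ∈ J ℓ) : I k = J ℓ := by
  refine eq_of_subset_of_card_le (fun j hjk => ?_) (by rw [hI.1, hJ.1])
  rcases eq_or_ne i j with rfl | hij
  · exact hiℓ
  obtain ⟨-, m, him, hjm⟩ :=
    mem_withinClusterPairs.1 (h ▸ (mem_withinClusterPairs (p := (i, j))).2 ⟨hij, k, hik, hjk⟩)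
  rwa [hJ.eq_of_mem hiℓ him]

theorem exists_perm_of_withinClusterPairs_eq (hn : 0 < n) (hI : BalancedPartition n I)
    (hJ : BalancedPartition n J) (h : withinClusterPairs I = withinClusterPairs J) :
    ∃ σ : Equiv.Perm (Fin K), ∀ k, I k = J (σ k) := by
  have hf : ∀ k, ∃ ℓ, I k = J ℓ := fun k =>
    let ⟨i, hi⟩ := hI.nonempty hn k
    let ⟨ℓ, hℓ⟩ := hJ.2.2 i
    ⟨ℓ, hI.eq_of_withinClusterPairs_eq hJ h hi hℓ⟩
  choose f hf using hf
  have hinj : Injective f := fun k k' hkk' => by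
    obtain ⟨i, hi⟩ := hI.nonempty hn k
    exact hI.eq_of_mem hi (by rw [hf k', ← hkk', ← hf k]; exact hi)
  exact ⟨Equiv.ofBijective f hinj.bijective_of_finite, hf⟩

end BalancedPartition

def IsPerfectlySeparated (g : Fin N → Fin N → ℝ) (J : Fin K → Finset (Fin N)) : Prop :=
  ∀ k : Fin K, ∀ i ∈ J k, ∀ j ∈ J k, ∀ k₁ k₂ : Fin K, k₁ ≠ k₂ → ∀ i' ∈ J k₁, ∀ j' ∈ J k₂,
    g i j < g i' j'

namespace IsPerfectlySeparated

variable {g : Fin N → Fin N → ℝ} {J : Fin K → Finset (Fin N)}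

theorem lt_of_notMem_withinClusterPairs (hsep : IsPerfectlySeparated g J)
    (hJ : BalancedPartition n J) {p q : Fin N × Fin N} (hp : p ∈ withinClusterPairs J)
    (hq : q.1 ≠ q.2) (hqJ : q ∉ withinClusterPairs J) : g p.1 p.2 < g q.1 q.2 := by
  obtain ⟨-, k, hp₁, hp₂⟩ := mem_withinClusterPairs.1 hp
  obtain ⟨k₁, hq₁⟩ := hJ.2.2 q.1
  obtain ⟨k₂, hq₂⟩ := hJ.2.2 q.2
  refine hsep k _ hp₁ _ hp₂ k₁ k₂ ?_ _ hq₁ _ hq₂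
  rintro rfl
  exact hqJ (mem_withinClusterPairs.2 ⟨hq, k₁, hq₁, hq₂⟩)

theorem forall_sdiff_lt (hsep : IsPerfectlySeparated g J) (hJ : BalancedPartition n J)
    {T : Finset (Fin N × Fin N)} (hT : T ⊆ univ.offDiag) :
    ∀ p ∈ withinClusterPairs J \ T, ∀ q ∈ T \ withinClusterPairs J, g p.1 p.2 < g q.1 q.2 := by
  intro p hp q hq
  rw [mem_sdiff] at hp hq
  exact hsep.lt_of_notMem_withinClusterPairs hJ hp.1 (mem_offDiag.1 (hT hq.1)).2.2 hq.2

theorem sum_withinClusterPairs_lt (hsep : IsPerfectlySeparated g J) (hJ : BalancedPartition n J)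
    {T : Finset (Fin N × Fin N)} (hT : T ⊆ univ.offDiag) (hcard : #T = K * n * (n - 1))
    (hne : T ≠ withinClusterPairs J) :
    ∑ p ∈ withinClusterPairs J, g p.1 p.2 < ∑ p ∈ T, g p.1 p.2 :=
  sum_lt_sum_of_forall_sdiff_lt (by rw [hcard, card_withinClusterPairs hJ]) hne.symm
    (hsep.forall_sdiff_lt hJ hT)

theorem sum_withinClusterPairs_le (hsep : IsPerfectlySeparated g J) (hJ : BalancedPartition n J)
    {T : Finset (Fin N × Fin N)} (hT : T ⊆ univ.offDiag) (hcard : #T = K * n * (n - 1)) :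
    ∑ p ∈ withinClusterPairs J, g p.1 p.2 ≤ ∑ p ∈ T, g p.1 p.2 :=
  sum_le_sum_of_forall_sdiff_lt (by rw [hcard, card_withinClusterPairs hJ])
    (hsep.forall_sdiff_lt hJ hT)

end IsPerfectlySeparated

variable {d : ℕ} (ξ : Fin N → EuclideanSpace ℝ (Fin d)) {I : Fin K → Finset (Fin N)}

theorem balancedKmeansObj_eq (hI : BalancedPartition n I) :
    balancedKmeansObj n ξ I = 1 / (2 * n) * ∑ k, ∑ i ∈ I k, ∑ j ∈ I k, ‖ξ i - ξ j‖ ^ 2 := by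
  rw [balancedKmeansObj, mul_sum]
  refine sum_congr rfl fun k _ => ?_
  rw [← hI.1 k]
  exact sum_norm_sub_mean_sq (I k) ξ

theorem balancedKmeansObj_eq_sum_withinClusterPairs (hI : BalancedPartition n I) :
    balancedKmeansObj n ξ I = 1 / (2 * n) * ∑ p ∈ withinClusterPairs I, ‖ξ p.1 - ξ p.2‖ ^ 2 := by
  rw [balancedKmeansObj_eq ξ hI, sum_withinClusterPairs hI.2.1 (fun i j => ‖ξ i - ξ j‖ ^ 2)]
  simp

end Partition

theorem perfect_separation_recovery_general (N d K n : ℕ)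
    (hn : 0 < n)
    (ξ : Fin N → EuclideanSpace ℝ (Fin d))
    (dist2 : Fin N → Fin N → ℝ)
    (hdist : ∀ i j, dist2 i j = ‖ξ i - ξ j‖ ^ 2)
    (J : Fin K → Finset (Fin N)) (hJ : BalancedPartition n J)
    -- perfect separation: every within-cluster distance is smaller than
    -- every between-cluster distance
    (hsep : ∀ k : Fin K, ∀ i ∈ J k, ∀ j ∈ J k,
      ∀ k₁ k₂ : Fin K, k₁ ≠ k₂ → ∀ i' ∈ J k₁, ∀ j' ∈ J k₂,
        dist2 i j < dist2 i' j') :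
    -- (a) optimality of J
    (∀ I : Fin K → Finset (Fin N), BalancedPartition n I →
      balancedKmeansObj n ξ J ≤ balancedKmeansObj n ξ I) ∧
    -- (b) uniqueness up to relabeling of the clusters
    (∀ I : Fin K → Finset (Fin N), BalancedPartition n I →
      balancedKmeansObj n ξ I = balancedKmeansObj n ξ J →
      ∃ σ : Equiv.Perm (Fin K), ∀ k, I k = J (σ k)) ∧
    -- (c) the optimal value
    (balancedKmeansObj n ξ J =
      (1 / (2 * n)) * ∑ k, ∑ i ∈ J k, ∑ j ∈ J k, dist2 i j) ∧
    -- (d) the within-cluster pairs form a set of K·n·(n−1) off-diagonal pairs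
    -- of minimal total squared distance
    ((Finset.univ.offDiag.filter
        (fun p : Fin N × Fin N => ∃ k, p.1 ∈ J k ∧ p.2 ∈ J k)).card
        = K * n * (n - 1) ∧
      ∀ T ⊆ (Finset.univ : Finset (Fin N)).offDiag, T.card = K * n * (n - 1) →
        ∑ p ∈ Finset.univ.offDiag.filter
            (fun p : Fin N × Fin N => ∃ k, p.1 ∈ J k ∧ p.2 ∈ J k),
          dist2 p.1 p.2 ≤ ∑ p ∈ T, dist2 p.1 p.2) := by
  obtain rfl : dist2 = fun i j => ‖ξ i - ξ j‖ ^ 2 := funext₂ hdist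
  replace hsep : IsPerfectlySeparated _ J := hsep
  have hobj := fun (I : Fin K → Finset (Fin N)) (hI : BalancedPartition n I) =>
    balancedKmeansObj_eq_sum_withinClusterPairs ξ hI
  have hscale : (0 : ℝ) < 1 / (2 * n) := by positivity
  refine ⟨fun I hI => ?_, fun I hI heq => ?_, balancedKmeansObj_eq ξ hJ,
    card_withinClusterPairs hJ, fun T hT hcard => hsep.sum_withinClusterPairs_le hJ hT hcard⟩
  · rw [hobj I hI, hobj J hJ]
    exact mul_le_mul_of_nonneg_left (hsep.sum_withinClusterPairs_le hJ (filter_subset _ _)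
      (card_withinClusterPairs hI)) hscale.le
  · refine hI.exists_perm_of_withinClusterPairs_eq hn hJ (by_contra fun hne => heq.not_gt ?_)
    rw [hobj I hI, hobj J hJ]
    exact mul_lt_mul_of_pos_left (hsep.sum_withinClusterPairs_lt hJ (filter_subset _ _)
      (card_withinClusterPairs hI) hne) hscale

theorem perfect_separation_recovery (N d K n : ℕ)
    (hK : 0 < K) (hn : 0 < n) (hN : N = K * n)
    (ξ : Fin N → EuclideanSpace ℝ (Fin d))
    (dist2 : Fin N → Fin N → ℝ)
    (hdist : ∀ i j, dist2 i j = ‖ξ i - ξ j‖ ^ 2)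
    (J : Fin K → Finset (Fin N)) (hJ : BalancedPartition n J)
    -- perfect separation: every within-cluster distance is smaller than
    -- every between-cluster distance
    (hsep : ∀ k : Fin K, ∀ i ∈ J k, ∀ j ∈ J k,
      ∀ k₁ k₂ : Fin K, k₁ ≠ k₂ → ∀ i' ∈ J k₁, ∀ j' ∈ J k₂,
        dist2 i j < dist2 i' j') :
    -- (a) optimality of J
    (∀ I : Fin K → Finset (Fin N), BalancedPartition n I →
      balancedKmeansObj n ξ J ≤ balancedKmeansObj n ξ I) ∧
    -- (b) uniqueness up to relabeling of the clusters
    (∀ I : Fin K → Finset (Fin N), BalancedPartition n I →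
      balancedKmeansObj n ξ I = balancedKmeansObj n ξ J →
      ∃ σ : Equiv.Perm (Fin K), ∀ k, I k = J (σ k)) ∧
    -- (c) the optimal value
    (balancedKmeansObj n ξ J =
      (1 / (2 * n)) * ∑ k, ∑ i ∈ J k, ∑ j ∈ J k, dist2 i j) ∧
    -- (d) the within-cluster pairs form a set of K·n·(n−1) off-diagonal pairs
    -- of minimal total squared distance
    ((Finset.univ.offDiag.filter
        (fun p : Fin N × Fin N => ∃ k, p.1 ∈ J k ∧ p.2 ∈ J k)).card
        = K * n * (n - 1) ∧
      ∀ T ⊆ (Finset.univ : Finset (Fin N)).offDiag, T.card = K * n * (n - 1) →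
        ∑ p ∈ Finset.univ.offDiag.filter
            (fun p : Fin N × Fin N => ∃ k, p.1 ∈ J k ∧ p.2 ∈ J k),
          dist2 p.1 p.2 ≤ ∑ p ∈ T, dist2 p.1 p.2) :=
  perfect_separation_recovery_general N d K n hn ξ dist2 hdist J hJ hsep
end
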